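/- Let R be a ring and 𝒢𝒫(R) the category of Gorenstein projective left R-modules with the exact structure inherited from short exact sequences of modules with all terms Gorenstein projective. Then 𝒢𝒫(R) is a Frobenius exact category whose projective-injective objects are exactly the projective R-modules. -/

import Mathlib

open CategoryTheory CategoryTheory.Limits Opposite

universe u

variable {R : Type u} [Ring R]

/-- `IsSES f g` : `0 → X → Y → Z → 0` is a short exact sequence of `R`-modules. -/
def IsSES {X Y Z : ModuleCat.{u} R} (f : X ⟶ Y) (g : Y ⟶ Z) : Prop :=
  ∃ w : f ≫ g = 0, (ShortComplex.mk f g w).ShortExact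

/-- `N` is Gorenstein projective: it is a syzygy (namely `Ker(P₋₁ → P₋₂)`) of a
totally acyclic complex of projectives, i.e. an exact complex of projective modules
which stays exact after applying `Hom(-, Q)` for every projective `Q`. -/
def IsGorensteinProj (N : ModuleCat.{u} R) : Prop :=
  ∃ P : ChainComplex (ModuleCat.{u} R) ℤ,
    (∀ n : ℤ, Projective (P.X n)) ∧
    (∀ n : ℤ, P.ExactAt n) ∧
    (∀ Q : ModuleCat.{u} R, Projective Q → ∀ n : ℤ, ∀ f : P.X n ⟶ Q,
      P.d (n+1) n ≫ f = 0 → ∃ g : P.X (n-1) ⟶ Q, P.d n (n-1) ≫ g = f) ∧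
    Nonempty (N ≅ kernel (P.d (-1) (-2)))

/-- A short exact sequence all of whose terms are Gorenstein projective: these are
the conflations of the exact structure on `𝒢𝒫(R)`. -/
def GPses {X Y Z : ModuleCat.{u} R} (f : X ⟶ Y) (g : Y ⟶ Z) : Prop :=
  IsSES f g ∧ IsGorensteinProj X ∧ IsGorensteinProj Y ∧ IsGorensteinProj Z

/-- Projective object of the exact category `𝒢𝒫(R)`. -/
def GPrelProj (G : ModuleCat.{u} R) : Prop :=
  IsGorensteinProj G ∧
    ∀ ⦃X Y Z : ModuleCat.{u} R⦄ (f : X ⟶ Y) (g : Y ⟶ Z), GPses f g →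
      ∀ h : G ⟶ Z, ∃ k : G ⟶ Y, k ≫ g = h

/-- Injective object of the exact category `𝒢𝒫(R)`. -/
def GPrelInj (G : ModuleCat.{u} R) : Prop :=
  IsGorensteinProj G ∧
    ∀ ⦃X Y Z : ModuleCat.{u} R⦄ (f : X ⟶ Y) (g : Y ⟶ Z), GPses f g →
      ∀ h : X ⟶ G, ∃ k : Y ⟶ G, f ≫ k = h

/-!
Projective modules are Gorenstein projective (the complex `0 → P = P → 0` is totally acyclic), and
the kernel of any differential of a totally acyclic complex is again Gorenstein projective, so
the short exact sequences `0 → Ker d₀ → P₀ → N → 0` and `0 → N → P₋₁ → Ker d₋₂ → 0` cut out of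
such a complex give enough projectives and injectives in `𝒢𝒫(R)`, all of them projective modules.
Total acyclicity says exactly that maps `Ker d₀ → Q` to a projective `Q` extend to `P₀`, that is
`Ext¹(N, Q) = 0`; hence projective modules are injective relative to conflations. Conversely an
object that is relatively projective or relatively injective splits off one of those sequences,
so it is a retract of a projective module.
-/

universe w

namespace CategoryTheory.ShortComplex.Exact

variable {C : Type*} [Category* C] [Abelian C] {S : ShortComplex C}

lemma shortExact_kernelι_kernelLift (hS : S.Exact) :
    (ShortComplex.mk (kernel.ι S.f) (kernel.lift S.g S.f S.zero) (by ext; simp)).ShortExact where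
  exact := ShortComplex.exact_of_f_is_kernel _
    (isKernelOfComp _ _ (kernelIsKernel S.f) _ (kernel.lift_ι _ _ _))
  epi_g := hS.epi_kernelLift

end CategoryTheory.ShortComplex.Exact

namespace CategoryTheory.ShortComplex.ShortExact

variable {C : Type*} [Category* C] [Abelian C] [HasExt.{w} C] {S : ShortComplex C}

open Abelian in
lemma ext_one_eq_zero_of_forall_exists_comp_f (hS : S.ShortExact) [Projective S.X₂] {Y : C}
    (hY : ∀ a : S.X₁ ⟶ Y, ∃ b, S.f ≫ b = a) (x : Ext.{w} S.X₃ Y 1) : x = 0 := by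
  obtain ⟨x₁, rfl⟩ := Ext.contravariant_sequence_exact₃ hS Y x (Ext.eq_zero_of_projective _)
    (add_zero 1)
  obtain ⟨b, hb⟩ := hY (Ext.homEquiv₀ x₁)
  rw [← Ext.mk₀_homEquiv₀_apply x₁, ← hb, ← Ext.mk₀_comp_mk₀, hS.extClass_comp_assoc]

open Abelian in
lemma exists_comp_f_eq_of_ext_one_eq_zero (hS : S.ShortExact) {Y : C}
    (hY : ∀ x : Ext.{w} S.X₃ Y 1, x = 0) (a : S.X₁ ⟶ Y) : ∃ b, S.f ≫ b = a := by
  obtain ⟨x₂, hx₂⟩ := Ext.contravariant_sequence_exact₁ hS Y (Ext.mk₀ a) (add_zero 1) (hY _)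
  refine ⟨Ext.homEquiv₀ x₂, (Ext.mk₀_bijective _ _).1 ?_⟩
  rw [← Ext.mk₀_comp_mk₀, Ext.mk₀_homEquiv₀_apply, hx₂]

end CategoryTheory.ShortComplex.ShortExact

namespace ChainComplex

variable {C : Type*} [Category* C] [Abelian C]

def translate (P : ChainComplex C ℤ) (c : ℤ) : ChainComplex C ℤ where
  X n := P.X (n + c)
  d i j := P.d (i + c) (j + c)
  shape i j h := P.shape _ _ (by simp at h ⊢; omega)
  d_comp_d' _ _ _ _ _ := P.d_comp_d _ _ _

structure IsTotallyAcyclic (P : ChainComplex C ℤ) : Prop where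
  projective (n : ℤ) : Projective (P.X n)
  exactAt (n : ℤ) : P.ExactAt n
  exists_d_comp (Q : C) [Projective Q] {i j k : ℤ} (hij : j + 1 = i) (hjk : k + 1 = j)
    (f : P.X j ⟶ Q) : P.d i j ≫ f = 0 → ∃ g : P.X k ⟶ Q, P.d j k ≫ g = f

namespace IsTotallyAcyclic

variable {P : ChainComplex C ℤ} (hP : P.IsTotallyAcyclic)
include hP

lemma exact_sc' {i j k : ℤ} (hij : j + 1 = i) (hjk : k + 1 = j) : (P.sc' i j k).Exact :=
  (P.exactAt_iff' i j k (by simpa using hij) (by simp; omega)).1 (hP.exactAt j)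

lemma exists_kernelι_comp (Q : C) [Projective Q] {j k : ℤ} (hjk : k + 1 = j)
    (u : kernel (P.d j k) ⟶ Q) : ∃ g : P.X j ⟶ Q, kernel.ι _ ≫ g = u := by
  set l := kernel.lift (P.d j k) (P.d (j + 1) j) (P.d_comp_d _ _ _)
  have : Epi l := (hP.exact_sc' rfl hjk).epi_kernelLift
  have hdl : P.d (j + 1 + 1) (j + 1) ≫ l = 0 := by ext; simp [l]
  obtain ⟨g, hg⟩ := hP.exists_d_comp Q rfl rfl (l ≫ u) (by rw [reassoc_of% hdl, zero_comp])
  exact ⟨g, by rw [← cancel_epi l, ← hg]; simp [l]⟩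

lemma ext_one_kernel_eq_zero [HasExt.{w} C] (Q : C) [Projective Q] {j k : ℤ} (hjk : k + 1 = j)
    (x : Abelian.Ext.{w} (kernel (P.d j k)) Q 1) : x = 0 :=
  have : Projective (P.sc' (j + 1) j k).X₁ := hP.projective (j + 1)
  (hP.exact_sc' rfl hjk).shortExact_kernelι_kernelLift.ext_one_eq_zero_of_forall_exists_comp_f
    (hP.exists_kernelι_comp Q rfl) x

lemma translate (c : ℤ) : (P.translate c).IsTotallyAcyclic where
  projective n := hP.projective (n + c)
  exactAt n := ((P.translate c).exactAt_iff' (n + 1) n (n - 1) (by simp) (by simp)).2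
    (hP.exact_sc' (i := n + 1 + c) (by omega) (by omega))
  exists_d_comp Q _ i j k hij hjk f hf :=
    hP.exists_d_comp Q (i := i + c) (j := j + c) (k := k + c) (by omega) (by omega) f hf

end IsTotallyAcyclic

open HomologicalComplex in
lemma isTotallyAcyclic_double (X : C) [Projective X] {i₀ i₁ : ℤ}
    (h : (ComplexShape.down ℤ).Rel i₀ i₁) :
    IsTotallyAcyclic (double (𝟙 X) h) := by
  have h' : i₁ + 1 = i₀ := h
  have hne : i₀ ≠ i₁ := by omega
  have : IsIso ((double (𝟙 X) h).d i₀ i₁) := by rw [double_d _ _ hne]; infer_instance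
  set D := double (𝟙 X) h
  have hzero {n : ℤ} (h₀ : n ≠ i₀) (h₁ : n ≠ i₁) : IsZero (D.X n) := isZero_double_X _ _ n h₀ h₁
  refine ⟨fun n => ?_, fun n => ?_, fun Q _ i j k hij hjk f hf => ?_⟩
  · by_cases h₀ : n = i₀
    · subst n; exact Projective.of_iso (doubleXIso₀ _ _).symm inferInstance
    by_cases h₁ : n = i₁
    · subst n; exact Projective.of_iso (doubleXIso₁ _ _ hne).symm inferInstance
    exact (hzero h₀ h₁).projective
  · by_cases h₀ : n = i₀
    · subst n
      rw [D.exactAt_iff' (i₀ + 1) i₀ i₁ (by simp) (by simp; omega),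
        ShortComplex.exact_iff_mono _ (double_d_eq_zero₀ (𝟙 X) h _ _ (by omega))]
      exact inferInstanceAs (Mono (D.d i₀ i₁))
    by_cases h₁ : n = i₁
    · subst n
      rw [D.exactAt_iff' i₀ i₁ (i₁ - 1) (by simp; omega) (by simp),
        ShortComplex.exact_iff_epi _ (double_d_eq_zero₀ (𝟙 X) h _ _ hne.symm)]
      exact inferInstanceAs (Epi (D.d i₀ i₁))
    rw [D.exactAt_iff' (n + 1) n (n - 1) (by simp) (by simp)]
    exact ShortComplex.exact_of_isZero_X₂ _ (hzero h₀ h₁)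
  · by_cases h₀ : j = i₀
    · obtain rfl : k = i₁ := by omega
      obtain rfl := h₀
      exact ⟨inv (D.d _ _) ≫ f, by simp⟩
    refine ⟨0, ?_⟩
    by_cases h₁ : j = i₁
    · obtain rfl : i = i₀ := by omega
      obtain rfl := h₁
      rw [comp_zero]
      exact ((cancel_epi _).1 (hf.trans comp_zero.symm)).symm
    exact (hzero h₀ h₁).eq_of_src _ _

end ChainComplex

lemma isSES_of_shortExact {S : ShortComplex (ModuleCat.{u} R)} (hS : S.ShortExact) :
    IsSES S.f S.g :=
  ⟨S.zero, hS⟩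

namespace IsSES

variable {X Y Z : ModuleCat.{u} R} {f : X ⟶ Y} {g : Y ⟶ Z}

lemma epi (h : IsSES f g) : Epi g :=
  h.2.epi_g

lemma comp_iso (h : IsSES f g) {Z' : ModuleCat.{u} R} (e : Z ≅ Z') : IsSES f (g ≫ e.hom) := by
  obtain ⟨w, hS⟩ := h
  refine ⟨by simp [reassoc_of% w], ShortComplex.shortExact_of_iso ?_ hS⟩
  exact ShortComplex.isoMk (Iso.refl _) (Iso.refl _) e

lemma iso_comp {X' : ModuleCat.{u} R} (e : X' ≅ X) (h : IsSES f g) : IsSES (e.hom ≫ f) g := by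
  obtain ⟨w, hS⟩ := h
  refine ⟨by simp [w], ShortComplex.shortExact_of_iso ?_ hS⟩
  exact ShortComplex.isoMk e.symm (Iso.refl _) (Iso.refl _)

end IsSES

lemma isGorensteinProj_iff {N : ModuleCat.{u} R} :
    IsGorensteinProj N ↔ ∃ P : ChainComplex (ModuleCat.{u} R) ℤ,
      P.IsTotallyAcyclic ∧ Nonempty (N ≅ kernel (P.d (-1) (-2))) := by
  constructor
  · rintro ⟨P, hproj, hexact, hext, e⟩
    refine ⟨P, ⟨hproj, hexact, fun Q _ i j k hij hjk f hf => ?_⟩, e⟩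
    subst hij
    obtain rfl : k = j - 1 := by omega
    exact hext Q inferInstance j f hf
  · rintro ⟨P, hP, e⟩
    exact ⟨P, hP.projective, hP.exactAt, fun Q _ n f hf => hP.exists_d_comp Q rfl (by omega) f hf,
      e⟩

lemma ChainComplex.IsTotallyAcyclic.isGorensteinProj_kernel
    {P : ChainComplex (ModuleCat.{u} R) ℤ} (hP : P.IsTotallyAcyclic) {j k : ℤ} (hjk : k + 1 = j) :
    IsGorensteinProj (kernel (P.d j k)) := by
  have kernel_congr : ∀ a b, j = a → k = b → Nonempty (kernel (P.d j k) ≅ kernel (P.d a b)) := by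
    rintro _ _ rfl rfl
    exact ⟨Iso.refl _⟩
  exact isGorensteinProj_iff.2
    ⟨P.translate (j + 1), hP.translate _, kernel_congr _ _ (by omega) (by omega)⟩

lemma isGorensteinProj_of_projective (P : ModuleCat.{u} R) [Projective P] : IsGorensteinProj P := by
  have h : (ComplexShape.down ℤ).Rel 0 (-1) := by simp
  have hd : (HomologicalComplex.double (𝟙 P) h).d (-1) (-2) = 0 :=
    HomologicalComplex.double_d_eq_zero₀ _ _ _ _ (by omega)
  exact isGorensteinProj_iff.2 ⟨_, ChainComplex.isTotallyAcyclic_double P h,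
    ⟨(kernelIsoOfEq hd ≪≫ kernelZeroIsoSource ≪≫
      HomologicalComplex.doubleXIso₁ _ h (by omega)).symm⟩⟩

namespace IsGorensteinProj

variable {N : ModuleCat.{u} R}

lemma exists_isSES_projective_onto (hN : IsGorensteinProj N) :
    ∃ (K P : ModuleCat.{u} R) (f : K ⟶ P) (g : P ⟶ N),
      IsGorensteinProj K ∧ Projective P ∧ IsSES f g := by
  obtain ⟨P, hP, ⟨e⟩⟩ := isGorensteinProj_iff.1 hN
  exact ⟨_, _, _, _, hP.isGorensteinProj_kernel (j := 0) (k := -1) (by omega), hP.projective 0,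
    (isSES_of_shortExact
      (hP.exact_sc' (by omega) (by omega)).shortExact_kernelι_kernelLift).comp_iso e.symm⟩

lemma exists_isSES_projective_into (hN : IsGorensteinProj N) :
    ∃ (P K : ModuleCat.{u} R) (f : N ⟶ P) (g : P ⟶ K),
      Projective P ∧ IsGorensteinProj K ∧ IsSES f g := by
  obtain ⟨P, hP, ⟨e⟩⟩ := isGorensteinProj_iff.1 hN
  exact ⟨_, _, _, _, hP.projective (-1), hP.isGorensteinProj_kernel (j := -2) (k := -3) (by omega),
    (isSES_of_shortExact
      (hP.exact_sc' (by omega) (by omega)).shortExact_kernelι_kernelLift).iso_comp e⟩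

open Abelian.Ext in
lemma ext_one_eq_zero (hN : IsGorensteinProj N) (Q : ModuleCat.{u} R) [Projective Q]
    (x : Abelian.Ext.{u} N Q 1) : x = 0 := by
  obtain ⟨P, hP, ⟨e⟩⟩ := isGorensteinProj_iff.1 hN
  calc x = (mk₀ e.hom).comp ((mk₀ e.inv).comp x (zero_add 1)) (zero_add 1) := by
        rw [mk₀_comp_mk₀_assoc, e.hom_inv_id, mk₀_id_comp]
    _ = 0 := by
        rw [hP.ext_one_kernel_eq_zero Q (by omega) ((mk₀ e.inv).comp x _), Abelian.Ext.comp_zero]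

lemma gPrelProj_iff (hG : IsGorensteinProj N) : GPrelProj N ↔ Projective N := by
  constructor
  · rintro ⟨-, hlift⟩
    obtain ⟨K, P, f, g, hK, hP, hfg⟩ := hG.exists_isSES_projective_onto
    obtain ⟨s, hs⟩ := hlift f g ⟨hfg, hK, isGorensteinProj_of_projective P, hG⟩ (𝟙 N)
    exact (Retract.mk s g hs).projective
  · intro _
    refine ⟨hG, fun X Y Z f g hfg h => ?_⟩
    have := hfg.1.epi
    exact ⟨Projective.factorThru h g, Projective.factorThru_comp h g⟩

lemma gPrelInj_iff (hG : IsGorensteinProj N) : GPrelInj N ↔ Projective N := by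
  constructor
  · rintro ⟨-, hext⟩
    obtain ⟨P, K, f, g, hP, hK, hfg⟩ := hG.exists_isSES_projective_into
    obtain ⟨r, hr⟩ := hext f g ⟨hfg, hG, isGorensteinProj_of_projective P, hK⟩ (𝟙 N)
    exact (Retract.mk f r hr).projective
  · intro _
    refine ⟨hG, fun X Y Z f g ⟨⟨_, hS⟩, _, _, hZ⟩ h => ?_⟩
    exact hS.exists_comp_f_eq_of_ext_one_eq_zero (hZ.ext_one_eq_zero N) h

end IsGorensteinProj

/-- `𝒢𝒫(R)` with the exact structure inherited from short exact
sequences of modules is a Frobenius exact category whose projective-injective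
objects are exactly the projective `R`-modules. -/
theorem stmt17 :
    (∀ P : ModuleCat.{u} R, Projective P → IsGorensteinProj P) ∧
    (∀ G : ModuleCat.{u} R, IsGorensteinProj G → (GPrelProj G ↔ Projective G)) ∧
    (∀ G : ModuleCat.{u} R, IsGorensteinProj G → (GPrelInj G ↔ Projective G)) ∧
    (∀ N : ModuleCat.{u} R, IsGorensteinProj N →
      ∃ (K P : ModuleCat.{u} R) (f : K ⟶ P) (g : P ⟶ N),
        IsGorensteinProj K ∧ Projective P ∧ IsSES f g) ∧
    (∀ N : ModuleCat.{u} R, IsGorensteinProj N →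
      ∃ (P K : ModuleCat.{u} R) (f : N ⟶ P) (g : P ⟶ K),
        Projective P ∧ IsGorensteinProj K ∧ IsSES f g) :=
  ⟨fun P _ => isGorensteinProj_of_projective P, fun _ hG => hG.gPrelProj_iff,
    fun _ hG => hG.gPrelInj_iff, fun _ hN => hN.exists_isSES_projective_onto,
    fun _ hN => hN.exists_isSES_projective_into⟩
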